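/- Let q ≥ 1 be an integer and z = 4q + 1. Let G be the group presented on z + 1 generators s, c₁, …, c_z (indices in ℤ/zℤ) with relators c_{i−q}⁻¹ · c_{i+2q}⁻¹ · s⁻¹ · c_i · c_{i+q} · s⁻¹ for each i ∈ ℤ/zℤ, together with the relator given by the ordered product over i = 1, …, z of c_i · c_{i+q} · c_{i+2q} · c_{i−q}. Then in the abelianization of G, the image of s satisfies s^{2z} = 1 and the image of the product c₁c₂⋯c_z satisfies (c₁c₂⋯c_z)⁴ = 1. -/

import Mathlib

/-!
In the abelianization, the product of the `z` relators
`c_{i-q}⁻¹ c_{i+2q}⁻¹ s⁻¹ c_i c_{i+q} s⁻¹` is `s^(-2z)` times index-shifted copies of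
`c₁ ⋯ c_z` that cancel, and the long relator becomes four shifted copies of `c₁ ⋯ c_z`.
Shifting an index is a reindexing of a product over `ZMod z`.
-/

namespace CobwebQ

/-- The generator `c i` in the free group on the generators `s, c₁, …, c_z`. -/
def c (z : ℕ) (i : ZMod z) : FreeGroup (Option (ZMod z)) := FreeGroup.of (some i)

/-- The generator `s` in the free group on the generators `s, c₁, …, c_z`. -/
def S (z : ℕ) : FreeGroup (Option (ZMod z)) := FreeGroup.of none

/-- The relators (4.8)–(4.9) of the simplified cobweb group `Cw(2z = 8q + 2)`,
with `z = 4q + 1` and indices taken modulo `z`. -/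
def rels (q z : ℕ) : Set (FreeGroup (Option (ZMod z))) :=
  {r | ∃ i : ZMod z,
      r = (c z (i - (q : ZMod z)))⁻¹ * (c z (i + 2 * (q : ZMod z)))⁻¹ * (S z)⁻¹ *
            c z i * c z (i + (q : ZMod z)) * (S z)⁻¹} ∪
  {((List.range z).map (fun k =>
      c z ((k + 1 : ℕ) : ZMod z) * c z (((k + 1 : ℕ) : ZMod z) + (q : ZMod z)) *
      c z (((k + 1 : ℕ) : ZMod z) + 2 * (q : ZMod z)) *
      c z (((k + 1 : ℕ) : ZMod z) - (q : ZMod z)))).prod}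

/-- The fundamental group of the cobweb manifold `Cw(2z = 8q + 2)`. -/
def Cw (q z : ℕ) : Type := PresentedGroup (rels q z)

instance (q z : ℕ) : Group (Cw q z) := by unfold Cw; infer_instance

end CobwebQ

theorem Fintype.prod_comp_add_right {G M : Type*} [AddGroup G] [Fintype G] [CommMonoid M]
    (f : G → M) (a : G) : ∏ i, f (i + a) = ∏ i, f i :=
  Equiv.prod_comp (Equiv.addRight a) f

theorem Fintype.prod_comp_sub_right {G M : Type*} [AddGroup G] [Fintype G] [CommMonoid M]
    (f : G → M) (a : G) : ∏ i, f (i - a) = ∏ i, f i :=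
  Equiv.prod_comp (Equiv.subRight a) f

theorem ZMod.prod_range_natCast {M : Type*} [CommMonoid M] {n : ℕ} [NeZero n]
    (f : ZMod n → M) : ∏ k ∈ Finset.range n, f k = ∏ i, f i :=
  Finset.prod_nbij' (fun k => (k : ZMod n)) ZMod.val (fun _ _ => Finset.mem_univ _)
    (fun i _ => Finset.mem_range.mpr (ZMod.val_lt i))
    (fun _ hk => ZMod.val_cast_of_lt (Finset.mem_range.mp hk))
    (fun i _ => ZMod.natCast_zmod_val i) (fun _ _ => rfl)

theorem ZMod.list_prod_map_range_succ {M : Type*} [CommMonoid M] {n : ℕ} [NeZero n]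
    (f : ZMod n → M) :
    ((List.range n).map fun k => f ((k + 1 : ℕ) : ZMod n)).prod = ∏ i, f i :=
  calc ((List.range n).map fun k => f ((k + 1 : ℕ) : ZMod n)).prod
      = ∏ k ∈ Finset.range n, f ((k : ZMod n) + 1) := by push_cast; rfl
    _ = ∏ i, f (i + 1) := ZMod.prod_range_natCast fun i => f (i + 1)
    _ = ∏ i, f i := Fintype.prod_comp_add_right f 1

section Abelian

variable {A : Type*} [CommGroup A] {n : ℕ} [NeZero n] (c : ZMod n → A) (a : ZMod n)

theorem pow_two_mul_eq_one_of_twisted_rels (s : A)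
    (h : ∀ i, (c (i - a))⁻¹ * (c (i + 2 * a))⁻¹ * s⁻¹ * c i * c (i + a) * s⁻¹ = 1) :
    s ^ (2 * n) = 1 := by
  have hrel : ∀ i, (c (i - a))⁻¹ * (c (i + 2 * a))⁻¹ * s⁻¹ * c i * c (i + a) * s⁻¹
      = c i * c (i + a) / (c (i - a) * c (i + 2 * a)) / s ^ 2 := by
    intro i
    simp only [div_eq_mul_inv, mul_inv, pow_two]
    ac_rfl
  have hprod := Finset.prod_eq_one (s := Finset.univ) fun i _ => h i
  simp only [hrel, Finset.prod_div_distrib, Finset.prod_mul_distrib, Finset.prod_const,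
    Finset.card_univ, ZMod.card] at hprod
  rwa [Fintype.prod_comp_add_right, Fintype.prod_comp_sub_right,
    Fintype.prod_comp_add_right, div_self', one_div, inv_eq_one,
    ← pow_mul] at hprod

theorem prod_pow_four_eq_one_of_rel
    (h : ((List.range n).map fun k =>
      c ((k + 1 : ℕ) : ZMod n) * c (((k + 1 : ℕ) : ZMod n) + a) *
        c (((k + 1 : ℕ) : ZMod n) + 2 * a) * c (((k + 1 : ℕ) : ZMod n) - a)).prod = 1) :
    (∏ i, c i) ^ 4 = 1 := by
  rw [ZMod.list_prod_map_range_succ fun i => c i * c (i + a) * c (i + 2 * a) * c (i - a)]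
    at h
  simp only [Finset.prod_mul_distrib] at h
  rw [Fintype.prod_comp_add_right, Fintype.prod_comp_add_right,
    Fintype.prod_comp_sub_right] at h
  rwa [pow_succ, pow_succ, pow_succ, pow_one]

end Abelian

namespace CobwebQ

theorem cobweb_abelianization_orders_general (q : ℕ) (z : ℕ) :
    (Abelianization.of (PresentedGroup.of (rels := rels q z) none)) ^ (2 * z) = 1 ∧
    (Abelianization.of
        (((List.range z).map (fun k =>
            PresentedGroup.of (rels := rels q z) (some ((k + 1 : ℕ) : ZMod z)))).prod)) ^ 4
      = 1 := by
  rcases z.eq_zero_or_pos with rfl | hz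
  · simp
  have : NeZero z := ⟨hz.ne'⟩
  let φ := Abelianization.of.comp (PresentedGroup.mk (rels q z))
  have hφ : ∀ r ∈ rels q z, φ r = 1 := fun r hr => by
    simp [φ, PresentedGroup.one_of_mem hr]
  refine ⟨pow_two_mul_eq_one_of_twisted_rels (fun i => φ (c z i)) q (φ (S z)) fun i => ?_, ?_⟩
  · simpa only [map_mul, map_inv] using hφ _ (Or.inl ⟨i, rfl⟩)
  · have hrel := hφ _ (Or.inr rfl)
    simp only [map_list_prod, List.map_map, Function.comp_def, map_mul] at hrel ⊢
    rw [ZMod.list_prod_map_range_succ fun i => Abelianization.of (PresentedGroup.of (some i))]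
    exact prod_pow_four_eq_one_of_rel (fun i => φ (c z i)) q hrel

theorem cobweb_abelianization_orders (q : ℕ) (hq : 1 ≤ q) (z : ℕ) (hz : z = 4 * q + 1) :
    (Abelianization.of (PresentedGroup.of (rels := rels q z) none)) ^ (2 * z) = 1 ∧
    (Abelianization.of
        (((List.range z).map (fun k =>
            PresentedGroup.of (rels := rels q z) (some ((k + 1 : ℕ) : ZMod z)))).prod)) ^ 4
      = 1 :=
  cobweb_abelianization_orders_general q z

end CobwebQ
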